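/- Fix β > 0 and z₀, σ₀ with σ₀ > 0. With γ and v⋆ as in the Bayesian quadratic Gaussian game (affine mean-feedback policy and the agent's best response), if θ ∼ N(z₀, σ₀²), then the principal's expected cost E[(θ − γ(v⋆(θ)) − v⋆(θ))² + 2γ(v⋆(θ))² + β v⋆(θ)²] equals (2β/(3β+2)) z₀² + ((β⁴ + β³ + 2β² − 4β + 2)/(β⁴ + 2β² + 1)) σ₀². -/

import Mathlib

open MeasureTheory ProbabilityTheory Real Set Filter Topology
open scoped ENNReal NNReal

lemma my_gauss_moment1 {b : ℝ} (hb : 0 < b) :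
    ∫ x : ℝ, x * Real.exp (-b * x ^ 2) = 0 := by
  have hi := integrable_mul_exp_neg_mul_sq hb
  have h0 : ∫ x in Iic (0:ℝ), -(x * Real.exp (-b * x ^ 2))
      = ∫ x in Ioi (0:ℝ), x * Real.exp (-b * x ^ 2) := by
    have h := integral_comp_neg_Iic (0:ℝ) (fun x => x * Real.exp (-b * x ^ 2))
    rw [neg_zero] at h
    rw [← h]
    refine setIntegral_congr_fun measurableSet_Iic fun x _ => ?_
    rw [neg_sq]
    ring
  rw [integral_neg] at h0
  rw [← intervalIntegral.integral_Iic_add_Ioi hi.integrableOn hi.integrableOn, ← h0]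
  ring

lemma my_gauss_moment2 {b : ℝ} (hb : 0 < b) :
    ∫ x : ℝ, x ^ 2 * Real.exp (-b * x ^ 2) = Real.sqrt (π / b) / (2 * b) := by
  have h2 : ∀ y : ℝ, y ^ (2:ℝ) = y ^ 2 := fun y => by
    rw [show (2:ℝ) = ((2:ℕ):ℝ) by norm_num, Real.rpow_natCast]
  have hint : Integrable (fun x : ℝ => x ^ 2 * Real.exp (-b * x ^ 2)) := by
    have := integrable_rpow_mul_exp_neg_mul_sq hb (s := 2) (by norm_num)
    simpa [h2] using this
  have hb' : (2 * b) ≠ 0 := by positivity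
  have heven : ∫ x : ℝ, x ^ 2 * Real.exp (-b * x ^ 2)
      = 2 * ∫ x in Ioi (0:ℝ), x ^ 2 * Real.exp (-b * x ^ 2) := by
    rw [← integral_comp_abs (f := fun y => y ^ 2 * Real.exp (-b * y ^ 2))]
    simp [sq_abs]
  set F : ℝ → ℝ := fun x => -(1/(2*b)) * (x * Real.exp (-b * x ^ 2)) with hF
  have hderiv : ∀ x ∈ Ici (0:ℝ), HasDerivAt F
      (x ^ 2 * Real.exp (-b * x ^ 2) - (1/(2*b)) * Real.exp (-b * x ^ 2)) x := by
    intro x _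
    have hx2 : HasDerivAt (fun y : ℝ => -b * y ^ 2) (-b * (2 * x)) x := by
      simpa using (hasDerivAt_pow 2 x).const_mul (-b)
    have he : HasDerivAt (fun y : ℝ => Real.exp (-b * y ^ 2))
        (Real.exp (-b * x ^ 2) * (-b * (2 * x))) x := hx2.exp
    have hm := ((hasDerivAt_id x).mul he).const_mul (-(1/(2*b)))
    refine hm.congr_deriv ?_
    simp only [id]
    field_simp
    ring
  have hint' : IntegrableOn
      (fun x : ℝ => x ^ 2 * Real.exp (-b * x ^ 2) - (1/(2*b)) * Real.exp (-b * x ^ 2))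
      (Ioi (0:ℝ)) :=
    (hint.sub ((integrable_exp_neg_mul_sq hb).const_mul _)).integrableOn
  have htend : Tendsto F atTop (nhds 0) := by
    have ho := rpow_mul_exp_neg_mul_sq_isLittleO_exp_neg hb 1
    simp only [Real.rpow_one] at ho
    have hexp : Tendsto (fun x : ℝ => Real.exp (-(1/2) * x)) atTop (nhds 0) :=
      Real.tendsto_exp_atBot.comp (tendsto_id.const_mul_atTop_of_neg (by norm_num))
    have h1 := (ho.trans_tendsto hexp).const_mul (-(1/(2*b)))
    rw [mul_zero] at h1
    exact h1
  have key := integral_Ioi_of_hasDerivAt_of_tendsto' hderiv hint' htend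
  simp only [hF, mul_zero, zero_mul, sub_zero, zero_sub, neg_neg, neg_zero, zero_pow] at key
  rw [integral_sub hint.integrableOn ((integrable_exp_neg_mul_sq hb).const_mul _).integrableOn,
    integral_const_mul, integral_gaussian_Ioi] at key
  have hIoi : ∫ x in Ioi (0:ℝ), x ^ 2 * Real.exp (-b * x ^ 2)
      = 1/(2*b) * (Real.sqrt (π/b)/2) := by linarith
  rw [heven, hIoi]
  field_simp

lemma my_gauss_quad (z σ : ℝ) (hσ : 0 < σ) (a b c : ℝ) :
    ∫ θ, (a + b*(θ - z) + c*(θ - z)^2) ∂(gaussianReal z (Real.toNNReal (σ^2)))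
      = a + c * σ^2 := by
  set v : ℝ≥0 := Real.toNNReal (σ^2) with hv
  have hσ2 : (0:ℝ) < σ^2 := by positivity
  have hv0 : v ≠ 0 := by
    rw [hv, Ne, Real.toNNReal_eq_zero]; push_neg; exact hσ2
  have hvr : (v:ℝ) = σ^2 := Real.coe_toNNReal _ (le_of_lt hσ2)
  set s : ℝ := σ^2 with hs
  set sb : ℝ := (2*s)⁻¹ with hsb
  have hsbpos : 0 < sb := by rw [hsb]; positivity
  set C : ℝ := (Real.sqrt (2*π*s))⁻¹ with hC
  rw [gaussianReal_of_var_ne_zero _ hv0]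
  have hmeas : Measurable fun x => (gaussianPDFReal z v x).toNNReal :=
    (measurable_gaussianPDFReal z v).real_toNNReal
  rw [(show (volume.withDensity (gaussianPDF z v))
      = volume.withDensity (fun x => ((gaussianPDFReal z v x).toNNReal : ℝ≥0∞)) from rfl),
    integral_withDensity_eq_integral_smul hmeas]
  set G : ℝ → ℝ := fun y => C * Real.exp (-sb * y^2) * (a + b*y + c*y^2) with hG
  have hptwise : ∀ x, (gaussianPDFReal z v x).toNNReal • (a + b*(x - z) + c*(x - z)^2)
      = G (x - z) := by
    intro x
    rw [NNReal.smul_def, Real.coe_toNNReal _ (gaussianPDFReal_nonneg z v x)]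
    rw [hG, gaussianPDFReal, hvr]
    have : -(x - z)^2 / (2*s) = -sb * (x - z)^2 := by
      rw [hsb, div_eq_mul_inv]; ring
    simp only [smul_eq_mul, this]
    rfl
  rw [integral_congr_ae (Filter.Eventually.of_forall hptwise)]
  rw [integral_sub_right_eq_self G z]
  have hsplit : G = fun y => a*C*Real.exp (-sb*y^2) + b*C*(y*Real.exp (-sb*y^2))
      + c*C*(y^2*Real.exp (-sb*y^2)) := by
    funext y; rw [hG]; ring
  have hie := integrable_exp_neg_mul_sq hsbpos
  have hi1 := integrable_mul_exp_neg_mul_sq hsbpos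
  have hi2 : Integrable (fun x : ℝ => x ^ 2 * Real.exp (-sb * x ^ 2)) := by
    have h2 : ∀ y : ℝ, y ^ (2:ℝ) = y ^ 2 := fun y => by
      rw [show (2:ℝ) = ((2:ℕ):ℝ) by norm_num, Real.rpow_natCast]
    have := integrable_rpow_mul_exp_neg_mul_sq hsbpos (s := 2) (by norm_num)
    simpa [h2] using this
  rw [hsplit]
  show (∫ x : ℝ, (a*C*Real.exp (-sb*x^2) + b*C*(x*Real.exp (-sb*x^2))
      + c*C*(x^2*Real.exp (-sb*x^2)))) = a + c * s
  have hiA : Integrable (fun x : ℝ => a*C*Real.exp (-sb*x^2) + b*C*(x*Real.exp (-sb*x^2))) := by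
    exact (hie.const_mul _).add (hi1.const_mul _)
  rw [integral_add hiA (hi2.const_mul _),
    integral_add (hie.const_mul _) (hi1.const_mul _),
    integral_const_mul, integral_const_mul, integral_const_mul,
    integral_gaussian, my_gauss_moment1 hsbpos, my_gauss_moment2 hsbpos]
  have hsqrt : Real.sqrt (π / sb) = Real.sqrt (2*π*s) := by
    congr 1
    rw [hsb]
    field_simp
  have hCs : C * Real.sqrt (2*π*s) = 1 := by
    rw [hC]
    refine inv_mul_cancel₀ ?_
    positivity
  have hinv : 1/(2*sb) = s := by rw [hsb]; field_simp
  rw [hsqrt]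
  calc a * C * Real.sqrt (2*π*s) + b * C * 0 + c * C * (Real.sqrt (2*π*s) / (2*sb))
      = a * (C * Real.sqrt (2*π*s)) + c * (C * Real.sqrt (2*π*s)) * (1/(2*sb)) := by ring
    _ = a + c * s := by rw [hCs, hinv]; ring

/-- The principal's expected equilibrium cost in the Bayesian quadratic
Gaussian game 𝔊₂ with affine mean-feedback policy equals
(2β/(3β+2)) z₀² + ((β⁴+β³+2β²−4β+2)/(β⁴+2β²+1)) σ₀². -/
theorem stmt_17 (β z₀ σ₀ : ℝ) (hβ : 0 < β) (hσ₀ : 0 < σ₀)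
    (γ : ℝ → ℝ)
    (hγ : ∀ v, γ v = (β^2*z₀ - (β - 1)*(v*(3*β + 2) - 2*z₀)) / (β*(3*β + 2)))
    (vstar : ℝ → ℝ)
    (hvstar : ∀ θ, vstar θ
      = (β*(3*β + 2)*θ - (β^2 + 2*β - 2)*z₀) / ((β^2 + 1)*(3*β + 2))) :
    ∫ θ, ((θ - γ (vstar θ) - vstar θ)^2 + 2*(γ (vstar θ))^2 + β*(vstar θ)^2)
        ∂(gaussianReal z₀ (Real.toNNReal (σ₀^2)))
      = (2*β/(3*β + 2)) * z₀^2
        + ((β^4 + β^3 + 2*β^2 - 4*β + 2)/(β^4 + 2*β^2 + 1)) * σ₀^2 := by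
  have h1 : β ≠ 0 := ne_of_gt hβ
  have h2 : 3*β + 2 ≠ 0 := by positivity
  have h3 : β^2 + 1 ≠ 0 := by positivity
  have h4 : β^4 + 2*β^2 + 1 ≠ 0 := by positivity
  have key : ∀ θ : ℝ, (θ - γ (vstar θ) - vstar θ)^2 + 2*(γ (vstar θ))^2 + β*(vstar θ)^2
      = (2*β/(3*β + 2)) * z₀^2 + (4*β/(3*β + 2)*z₀)*(θ - z₀)
        + ((β^4 + β^3 + 2*β^2 - 4*β + 2)/(β^4 + 2*β^2 + 1))*(θ - z₀)^2 := by
    intro θ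
    rw [hγ, hvstar]
    field_simp
    ring
  rw [integral_congr_ae (Filter.Eventually.of_forall key)]
  exact my_gauss_quad z₀ σ₀ hσ₀ _ _ _
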